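/- Fidelity is monotone under partial trace: for positive semidefinite operators ρ, σ on X⊗Y, F(ρ,σ) ≤ F(Tr_Y(ρ), Tr_Y(σ)). -/

import Mathlib

open Matrix
open scoped Kronecker ComplexOrder

noncomputable section

/-- `Φ ⊗ id` : apply a linear map `Φ` on `L(X)` to the first tensor factor of `L(X ⊗ Z)`. -/
def lmapTensorId {n m k : Type*} [Fintype n] [Fintype k]
    (Φ : Matrix n n ℂ →ₗ[ℂ] Matrix m m ℂ)
    (M : Matrix (n × k) (n × k) ℂ) : Matrix (m × k) (m × k) ℂ :=
  fun p q => Φ (fun i j => M (i, p.2) (j, q.2)) p.1 q.1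

/-- `id ⊗ Ψ` : apply a linear map `Ψ` on `L(Z)` to the second tensor factor of `L(Y ⊗ Z)`. -/
def idTensorLmap {n k l : Type*} [Fintype n] [Fintype k]
    (Ψ : Matrix k k ℂ →ₗ[ℂ] Matrix l l ℂ)
    (M : Matrix (n × k) (n × k) ℂ) : Matrix (n × l) (n × l) ℂ :=
  fun p q => Ψ (fun a b => M (p.1, a) (q.1, b)) p.2 q.2

/-- Complete positivity: `Φ ⊗ id_k` maps positive semidefinite operators to positive
semidefinite operators for every finite-dimensional ancilla `k`. -/
def IsCompletelyPositive {n m : Type*} [Fintype n] [Fintype m]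
    (Φ : Matrix n n ℂ →ₗ[ℂ] Matrix m m ℂ) : Prop :=
  ∀ (k : Type) [Fintype k] [DecidableEq k],
    ∀ M : Matrix (n × k) (n × k) ℂ, M.PosSemidef → (lmapTensorId Φ M).PosSemidef

def IsTracePreserving {n m : Type*} [Fintype n] [Fintype m]
    (Φ : Matrix n n ℂ →ₗ[ℂ] Matrix m m ℂ) : Prop :=
  ∀ M : Matrix n n ℂ, (Φ M).trace = M.trace

/-- Partial trace over the first tensor factor. -/
def trFst {n k : Type*} [Fintype n] (M : Matrix (n × k) (n × k) ℂ) : Matrix k k ℂ :=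
  fun a b => ∑ i : n, M (i, a) (i, b)

/-- Partial trace over the second tensor factor. -/
def trSnd {n k : Type*} [Fintype k] (M : Matrix (n × k) (n × k) ℂ) : Matrix n n ℂ :=
  fun i j => ∑ a : k, M (i, a) (j, a)

/-- Hilbert-Schmidt inner product `⟨A, B⟩ = Tr(A* B)`. -/
def minner {n : Type*} [Fintype n] (A B : Matrix n n ℂ) : ℂ := (Aᴴ * B).trace

open Classical in
/-- Square root of a positive semidefinite matrix (junk value `0` otherwise). -/
def msqrt {n : Type*} [Fintype n] [DecidableEq n] (M : Matrix n n ℂ) : Matrix n n ℂ :=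
  if h : M.PosSemidef then h.1.cfc Real.sqrt else 0

/-- Trace norm `‖M‖₁ = Tr √(M* M)`. -/
def traceNorm {n : Type*} [Fintype n] [DecidableEq n] (M : Matrix n n ℂ) : ℝ :=
  (((Matrix.posSemidef_conjTranspose_mul_self M).1.cfc Real.sqrt).trace).re

/-- Fidelity `F(Q, R) = ‖√Q √R‖₁` of positive semidefinite matrices. -/
def fid {n : Type*} [Fintype n] [DecidableEq n] (Q R : Matrix n n ℂ) : ℝ :=
  traceNorm (msqrt Q * msqrt R)

/-- Choi-Jamiolkowski operator `J(Φ) = Σ_{i,j} Φ(|i⟩⟨j|) ⊗ |i⟩⟨j|`. -/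
def choi {n m : Type*} [Fintype n] [DecidableEq n] [Fintype m]
    (Φ : Matrix n n ℂ →ₗ[ℂ] Matrix m m ℂ) : Matrix (m × n) (m × n) ℂ :=
  fun p q => Φ (Matrix.single p.2 q.2 1) p.1 q.1

/-- Tensor product of vectors. -/
def tensorVec {α β : Type*} (v : α → ℂ) (w : β → ℂ) : α × β → ℂ := fun p => v p.1 * w p.2

/-- `u = (|00⟩ + |11⟩)/√2`. -/
def uVec : Fin 2 × Fin 2 → ℂ := fun p =>
  if p = (0, 0) then (Real.sqrt 2 : ℂ)⁻¹ else if p = (1, 1) then (Real.sqrt 2 : ℂ)⁻¹ else 0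

/-- `v = cos(π/8)|00⟩ + sin(π/8)|11⟩`. -/
def vVec : Fin 2 × Fin 2 → ℂ := fun p =>
  if p = (0, 0) then (Real.cos (Real.pi / 8) : ℂ)
  else if p = (1, 1) then (Real.sin (Real.pi / 8) : ℂ) else 0

/-- `w = -sin(π/8)|00⟩ + cos(π/8)|11⟩`. -/
def wVec : Fin 2 × Fin 2 → ℂ := fun p =>
  if p = (0, 0) then -(Real.sin (Real.pi / 8) : ℂ)
  else if p = (1, 1) then (Real.cos (Real.pi / 8) : ℂ) else 0


/-!
Fidelity is the value of a semidefinite program: `F(P, Q)` is the largest `Re Tr X` over all `X`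
for which the block matrix `[P, X; Xᴴ, Q]` is positive semidefinite. The maximum is attained at
`X = √P V √Q`, where `√P √Q = V |√P √Q|` is a polar decomposition; conversely, writing a feasible
block matrix as a Gram matrix `[C₁, C₂]ᴴ [C₁, C₂]` with `C₁ = W₁ √P`, `C₂ = W₂ √Q` for
contractions `W₁, W₂`, the Cauchy–Schwarz inequality bounds `Re Tr X` by `‖√P √Q‖₁`.
Applying `Tr_Y` blockwise to an optimal block matrix for `(ρ, σ)` gives a feasible one for
`(Tr_Y ρ, Tr_Y σ)` with the same value.
-/

open scoped MatrixOrder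

namespace Matrix

section Trace
variable {a b c : Type*} [Fintype a] [Fintype b] [Fintype c]

lemma norm_trace_conjTranspose_mul_le (F G : Matrix a b ℂ) :
    ‖(Fᴴ * G).trace‖ ≤ √(Fᴴ * F).trace.re * √(Gᴴ * G).trace.re := by
  let toE (M : Matrix a b ℂ) : EuclideanSpace ℂ (b × a) := WithLp.toLp 2 M.vec
  have hinner (F G : Matrix a b ℂ) : inner ℂ (toE F) (toE G) = (Fᴴ * G).trace := by
    rw [EuclideanSpace.inner_toLp_toLp, dotProduct_comm, star_vec_dotProduct_vec]
  calc ‖(Fᴴ * G).trace‖ = ‖inner ℂ (toE F) (toE G)‖ := by rw [hinner]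
    _ ≤ ‖toE F‖ * ‖toE G‖ := norm_inner_le_norm _ _
    _ = _ := by
      rw [norm_eq_sqrt_re_inner (𝕜 := ℂ), norm_eq_sqrt_re_inner (𝕜 := ℂ), hinner, hinner]
      rfl

lemma re_trace_le_re_trace {A B : Matrix b b ℂ} (h : A ≤ B) : A.trace.re ≤ B.trace.re :=
  (Complex.le_def.1 ((tracePositiveLinearMap b ℂ ℂ).monotone h)).1

variable [DecidableEq b]

lemma conjTranspose_mul_mul_le {N : Matrix a b ℂ} (hN : Nᴴ * N ≤ 1) (R : Matrix b c ℂ) :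
    (N * R)ᴴ * (N * R) ≤ Rᴴ * R := by
  rw [le_iff]
  convert (sub_nonneg.2 hN).posSemidef.conjTranspose_mul_mul_same R using 1
  simp only [conjTranspose_mul, Matrix.mul_sub, Matrix.sub_mul, Matrix.mul_one, Matrix.mul_assoc]

end Trace

section FunctionalCalculus
variable {n : Type*} [Fintype n] [DecidableEq n]

lemma conjTranspose_cfc (f : ℝ → ℝ) (A : Matrix n n ℂ) : (cfc f A)ᴴ = cfc f A :=
  IsSelfAdjoint.cfc

lemma conjTranspose_sqrt (A : Matrix n n ℂ) : (CFC.sqrt A)ᴴ = CFC.sqrt A :=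
  (CFC.sqrt_nonneg A).posSemidef.1

lemma cfc_mul_cfc (f g : ℝ → ℝ) (A : Matrix n n ℂ) :
    cfc f A * cfc g A = cfc (fun x => f x * g x) A :=
  (cfc_mul f g A (A.finite_real_spectrum.continuousOn f)
    (A.finite_real_spectrum.continuousOn g)).symm

lemma IsHermitian.cfc_mul_mul_cfc {A : Matrix n n ℂ} (hA : A.IsHermitian) (f g : ℝ → ℝ) :
    cfc f A * A * cfc g A = cfc (fun x => f x * x * g x) A :=
  calc cfc f A * A * cfc g A = cfc f A * cfc (fun x => x) A * cfc g A := by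
        rw [cfc_id' ℝ A hA.isSelfAdjoint]
    _ = _ := by rw [cfc_mul_cfc, cfc_mul_cfc]

end FunctionalCalculus

lemma mul_cfc_conjTranspose_mul_self_eq_zero {a b : Type*} [Fintype a] [Fintype b]
    [DecidableEq b] (C : Matrix a b ℂ) {f : ℝ → ℝ}
    (hf : ∀ x ∈ spectrum ℝ (Cᴴ * C), x ≠ 0 → f x = 0) : C * cfc f (Cᴴ * C) = 0 := by
  rw [← conjTranspose_mul_self_eq_zero, conjTranspose_mul, conjTranspose_cfc, Matrix.mul_assoc,
    ← Matrix.mul_assoc Cᴴ, ← Matrix.mul_assoc,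
    (posSemidef_conjTranspose_mul_self C).1.cfc_mul_mul_cfc, ← cfc_zero ℝ (Cᴴ * C)]
  refine cfc_congr fun x hx => ?_
  by_cases h : x = 0 <;> simp [h, hf x hx]

theorem exists_eq_mul_sqrt_conjTranspose_mul_self {a b : Type*} [Fintype a] [Fintype b]
    [DecidableEq b] (C : Matrix a b ℂ) :
    ∃ W : Matrix a b ℂ, C = W * CFC.sqrt (Cᴴ * C) ∧ Cᴴ * W = CFC.sqrt (Cᴴ * C) ∧
      Wᴴ * W ≤ 1 := by
  set H := Cᴴ * C
  have hH : H.PosSemidef := posSemidef_conjTranspose_mul_self C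
  have hsqrt : CFC.sqrt H = cfc Real.sqrt H := by
    rw [CFC.sqrt_eq_real_sqrt H hH.nonneg, cfcₙ_eq_cfc]
  -- `G` inverts `√H` on the range of `H` and, by the junk value `0⁻¹ = 0`, vanishes on its
  -- kernel; so `E = G √H` is the projection onto the range of `H`
  set G := cfc (fun x : ℝ => (√x)⁻¹) H
  set E := cfc (fun x : ℝ => (√x)⁻¹ * √x) H
  have hHG : H * G = CFC.sqrt H := by
    conv_lhs => rw [← cfc_id' ℝ H]
    rw [cfc_mul_cfc, hsqrt]
    refine cfc_congr fun x _ => ?_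
    rw [← div_eq_mul_inv, Real.div_sqrt]
  have hGHG : G * H * G = E := by
    rw [hH.1.cfc_mul_mul_cfc]
    refine cfc_congr fun x hx => ?_
    rcases (spectrum_nonneg_of_nonneg hH.nonneg hx).eq_or_lt' with rfl | hx
    · simp
    · have : √x ≠ 0 := (Real.sqrt_pos.2 hx).ne'
      field_simp
      rw [Real.sq_sqrt hx.le]
  have hCE : C = C * E := by
    have hker := mul_cfc_conjTranspose_mul_self_eq_zero C (f := fun x => 1 - (√x)⁻¹ * √x)
      fun x hx hx0 => ?_
    · rwa [cfc_sub (hf := H.finite_real_spectrum.continuousOn _)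
        (hg := H.finite_real_spectrum.continuousOn _), cfc_const_one ℝ H, Matrix.mul_sub,
        Matrix.mul_one, sub_eq_zero] at hker
    · have hx_pos := (spectrum_nonneg_of_nonneg hH.nonneg hx).lt_of_ne' hx0
      simp [(Real.sqrt_pos.2 hx_pos).ne']
  refine ⟨C * G, ?_, by rw [← Matrix.mul_assoc, hHG], ?_⟩
  · rwa [Matrix.mul_assoc, hsqrt, cfc_mul_cfc]
  · rw [conjTranspose_mul, conjTranspose_cfc, Matrix.mul_assoc, ← Matrix.mul_assoc Cᴴ,
      ← Matrix.mul_assoc, hGHG]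
    refine cfc_le_one _ _ fun x _ => ?_
    by_cases h : √x = 0 <;> simp [h]

lemma conjTranspose_fromCols_mul_fromCols {a m m' : Type*} [Fintype a] (A : Matrix a m ℂ)
    (B : Matrix a m' ℂ) :
    (fromCols A B)ᴴ * fromCols A B = fromBlocks (Aᴴ * A) (Aᴴ * B) (Bᴴ * A) (Bᴴ * B) := by
  rw [conjTranspose_fromCols_eq_fromRows_conjTranspose, fromRows_mul_fromCols]

lemma posSemidef_fromBlocks_of_conjTranspose_mul_self_le_one {a b m m' : Type*} [Fintype a]
    [Fintype b] [DecidableEq b] [Fintype m] [Fintype m'] {K : Matrix a b ℂ} (hK : Kᴴ * K ≤ 1)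
    (A : Matrix a m ℂ) (B : Matrix b m' ℂ) :
    (fromBlocks (Aᴴ * A) (Aᴴ * K * B) (Aᴴ * K * B)ᴴ (Bᴴ * B)).PosSemidef := by
  set S := CFC.sqrt (1 - Kᴴ * K)
  have hSS : Sᴴ * S = 1 - Kᴴ * K := by
    rw [conjTranspose_sqrt, CFC.sqrt_mul_sqrt_self _ (sub_nonneg.2 hK)]
  have hGram : fromBlocks (Aᴴ * A) (Aᴴ * K * B) (Aᴴ * K * B)ᴴ (Bᴴ * B) =
      (fromBlocks A (K * B) 0 (S * B))ᴴ * fromBlocks A (K * B) 0 (S * B) := by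
    rw [fromBlocks_conjTranspose, fromBlocks_multiply]
    congr 1
    · simp
    · simp [Matrix.mul_assoc]
    · simp [Matrix.mul_assoc]
    · simp only [conjTranspose_mul]
      rw [Matrix.mul_assoc Bᴴ Sᴴ, ← Matrix.mul_assoc Sᴴ, hSS, Matrix.sub_mul, Matrix.one_mul,
        Matrix.mul_sub, Matrix.mul_assoc Kᴴ K B, Matrix.mul_assoc Bᴴ Kᴴ, add_sub_cancel]
  rw [hGram]
  exact posSemidef_conjTranspose_mul_self _

end Matrix

open Matrix

section Fidelity
variable {m : Type*} [Fintype m] [DecidableEq m]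

lemma msqrt_eq_sqrt {P : Matrix m m ℂ} (hP : P.PosSemidef) : msqrt P = CFC.sqrt P := by
  rw [msqrt, dif_pos hP, ← hP.1.cfc_eq, CFC.sqrt_eq_real_sqrt P hP.nonneg, cfcₙ_eq_cfc]

lemma traceNorm_eq_re_trace_sqrt (B : Matrix m m ℂ) :
    traceNorm B = (CFC.sqrt (Bᴴ * B)).trace.re := by
  rw [traceNorm, ← IsHermitian.cfc_eq, CFC.sqrt_eq_real_sqrt (Bᴴ * B)
    (posSemidef_conjTranspose_mul_self B).nonneg, cfcₙ_eq_cfc]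

lemma fid_eq_traceNorm {P Q : Matrix m m ℂ} (hP : P.PosSemidef) (hQ : Q.PosSemidef) :
    fid P Q = traceNorm (CFC.sqrt P * CFC.sqrt Q) := by
  rw [fid, msqrt_eq_sqrt hP, msqrt_eq_sqrt hQ]

lemma re_trace_conjTranspose_mul_mul_le_traceNorm {a : Type*} [Fintype a] {K L : Matrix a m ℂ}
    (hK : Kᴴ * K ≤ 1) (hL : Lᴴ * L ≤ 1) (B : Matrix m m ℂ) :
    (Lᴴ * K * B).trace.re ≤ traceNorm B := by
  rw [traceNorm_eq_re_trace_sqrt]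
  obtain ⟨V, hB, -, hV⟩ := exists_eq_mul_sqrt_conjTranspose_mul_self B
  set T := CFC.sqrt (Bᴴ * B)
  set R := CFC.sqrt T
  have hRH : Rᴴ = R := conjTranspose_sqrt T
  have hRR : Rᴴ * R = T := by rw [hRH, CFC.sqrt_mul_sqrt_self T (CFC.sqrt_nonneg _)]
  have htr : (Lᴴ * K * B).trace = ((L * R)ᴴ * (K * (V * R))).trace :=
    calc (Lᴴ * K * B).trace = (Lᴴ * K * V * R * R).trace := by
          rw [hB, ← hRR, hRH]; simp only [Matrix.mul_assoc]
      _ = (R * (Lᴴ * K * V * R)).trace := trace_mul_comm _ _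
      _ = _ := by rw [conjTranspose_mul, hRH]; simp only [Matrix.mul_assoc]
  have hL' := re_trace_le_re_trace (conjTranspose_mul_mul_le hL R)
  have hK' := re_trace_le_re_trace
    ((conjTranspose_mul_mul_le hK (V * R)).trans (conjTranspose_mul_mul_le hV R))
  rw [← hRR]
  calc (Lᴴ * K * B).trace.re ≤ ‖((L * R)ᴴ * (K * (V * R))).trace‖ := htr ▸ Complex.re_le_norm _
    _ ≤ √((L * R)ᴴ * (L * R)).trace.re * √((K * (V * R))ᴴ * (K * (V * R))).trace.re :=
      norm_trace_conjTranspose_mul_le _ _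
    _ ≤ √(Rᴴ * R).trace.re * √(Rᴴ * R).trace.re := by gcongr
    _ = (Rᴴ * R).trace.re :=
      Real.mul_self_sqrt <| by
        simpa using re_trace_le_re_trace (posSemidef_conjTranspose_mul_self R).nonneg

lemma re_trace_le_fid_of_posSemidef_fromBlocks {P Q X : Matrix m m ℂ} (hP : P.PosSemidef)
    (hQ : Q.PosSemidef) (h : (fromBlocks P X Xᴴ Q).PosSemidef) : X.trace.re ≤ fid P Q := by
  obtain ⟨C, hC⟩ := CStarAlgebra.nonneg_iff_eq_star_mul_self.mp h.nonneg
  rw [← fromCols_toCols C, star_eq_conjTranspose, conjTranspose_fromCols_mul_fromCols,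
    fromBlocks_inj] at hC
  obtain ⟨rfl, rfl, -, rfl⟩ := hC
  obtain ⟨W₁, hC₁, -, hW₁⟩ := exists_eq_mul_sqrt_conjTranspose_mul_self C.toCols₁
  obtain ⟨W₂, hC₂, -, hW₂⟩ := exists_eq_mul_sqrt_conjTranspose_mul_self C.toCols₂
  set R₁ := CFC.sqrt (C.toCols₁ᴴ * C.toCols₁)
  set R₂ := CFC.sqrt (C.toCols₂ᴴ * C.toCols₂)
  have hR₂ : R₂ᴴ = R₂ := conjTranspose_sqrt _
  calc (C.toCols₁ᴴ * C.toCols₂).trace.re = (C.toCols₂ᴴ * C.toCols₁).trace.re := by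
        rw [← conjTranspose_conjTranspose C.toCols₂, ← conjTranspose_mul, trace_conjTranspose,
          conjTranspose_conjTranspose]
        exact (Complex.conj_re _).symm
    _ = (W₂ᴴ * W₁ * (R₁ * R₂)).trace.re := by
        rw [hC₁, hC₂, conjTranspose_mul, hR₂, Matrix.mul_assoc, trace_mul_comm]
        simp only [Matrix.mul_assoc]
    _ ≤ fid _ _ := by
        rw [fid_eq_traceNorm hP hQ]
        exact re_trace_conjTranspose_mul_mul_le_traceNorm hW₁ hW₂ _

lemma exists_posSemidef_fromBlocks_re_trace_eq_fid {P Q : Matrix m m ℂ} (hP : P.PosSemidef)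
    (hQ : Q.PosSemidef) :
    ∃ X : Matrix m m ℂ, (fromBlocks P X Xᴴ Q).PosSemidef ∧ X.trace.re = fid P Q := by
  obtain ⟨V, -, hV, hVV⟩ :=
    exists_eq_mul_sqrt_conjTranspose_mul_self (CFC.sqrt P * CFC.sqrt Q)
  refine ⟨CFC.sqrt P * V * CFC.sqrt Q, ?_, ?_⟩
  · have := posSemidef_fromBlocks_of_conjTranspose_mul_self_le_one hVV (CFC.sqrt P) (CFC.sqrt Q)
    rwa [conjTranspose_sqrt, conjTranspose_sqrt, CFC.sqrt_mul_sqrt_self P hP.nonneg,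
      CFC.sqrt_mul_sqrt_self Q hQ.nonneg] at this
  · rw [fid_eq_traceNorm hP hQ, traceNorm_eq_re_trace_sqrt, ← hV, conjTranspose_mul,
      conjTranspose_sqrt, conjTranspose_sqrt, Matrix.mul_assoc, trace_mul_comm, Matrix.mul_assoc,
      trace_mul_comm]

end Fidelity

section PartialTrace
variable {n k : Type*} [Fintype k]

lemma trSnd_eq_sum_submatrix (M : Matrix (n × k) (n × k) ℂ) :
    trSnd M = ∑ a, M.submatrix (·, a) (·, a) := by
  ext i j
  simp [trSnd, Matrix.sum_apply]

lemma Matrix.PosSemidef.trSnd {M : Matrix (n × k) (n × k) ℂ} (hM : M.PosSemidef) :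
    (trSnd M).PosSemidef := by
  rw [trSnd_eq_sum_submatrix]
  exact posSemidef_sum _ fun a _ => hM.submatrix _

lemma trSnd_conjTranspose (M : Matrix (n × k) (n × k) ℂ) : trSnd Mᴴ = (trSnd M)ᴴ := by
  ext i j
  simp [trSnd]

lemma trace_trSnd [Fintype n] (M : Matrix (n × k) (n × k) ℂ) : (trSnd M).trace = M.trace := by
  simp [trSnd, Matrix.trace, Fintype.sum_prod_type]

lemma fromBlocks_trSnd (A B C D : Matrix (n × k) (n × k) ℂ) :
    fromBlocks (trSnd A) (trSnd B) (trSnd C) (trSnd D) =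
      trSnd ((fromBlocks A B C D).submatrix (Equiv.sumProdDistrib n n k)
        (Equiv.sumProdDistrib n n k)) := by
  ext (i | i) (j | j) <;> simp [trSnd]

end PartialTrace

/-- Monotonicity of fidelity under the partial trace: for positive semidefinite `ρ, σ` on
`X ⊗ Y`, `F(ρ, σ) ≤ F(Tr_Y(ρ), Tr_Y(σ))`. -/
theorem stmt9 {n k : Type*} [Fintype n] [DecidableEq n] [Fintype k] [DecidableEq k]
    (ρ σ : Matrix (n × k) (n × k) ℂ) (hρ : ρ.PosSemidef) (hσ : σ.PosSemidef) :
    fid ρ σ ≤ fid (trSnd ρ) (trSnd σ) := by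
  obtain ⟨X, hX, hXtr⟩ := exists_posSemidef_fromBlocks_re_trace_eq_fid hρ hσ
  have hXtrSnd : (fromBlocks (trSnd ρ) (trSnd X) (trSnd X)ᴴ (trSnd σ)).PosSemidef := by
    rw [← trSnd_conjTranspose, fromBlocks_trSnd]
    exact (hX.submatrix _).trSnd
  calc fid ρ σ = (trSnd X).trace.re := by rw [trace_trSnd, hXtr]
    _ ≤ fid (trSnd ρ) (trSnd σ) :=
      re_trace_le_fid_of_posSemidef_fromBlocks hρ.trSnd hσ.trSnd hXtrSnd
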